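/- arXiv:2101.03052 — 2 statements merged into one kernel-verified Lean document; each statement's English description precedes it below -/
import Mathlib

section
/- For partitions t^a ∈ Part^⟨m^a⟩ indexed by a finite totally ordered set A, there is a unique element ◁_A t^a ∈ Part^⟨Σ_A m^a⟩ obtained by sorting the multiset of all values t^{a,i} into nondecreasing order, and for each a ∈ A the monotone map δ^a : ⟨Σ_A m^a⟩ → ⟨m^a⟩ defined by δ^a i = min{ j : (◁_A t^{a'})^i ≤ t^{a,j} } (and m^a if no such j exists) satisfies δ^a · (◁_A t^{a'}) = t^a. -/
/-- `Part^⟨m⟩`: partitions of the interval, i.e. monotone functions `Fin m → [0,1]`. -/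
def PartSp (m : ℕ) : Type := { t : Fin m → unitInterval // Monotone t }

open Classical in
/-- The monotone map `δ^a i := min { j | (◁_A t)^i ≤ t^{a,j} }`, with value `m a` when no
such `j` exists, associated to a family of partitions `t` and a partition `s`
(meant to be the ordering `◁_A t^a` of all the values). -/
noncomputable def deltaMap {A : Type} [Fintype A] (m : A → ℕ) (t : ∀ a, PartSp (m a))
    (s : PartSp (∑ a, m a)) (a : A) (i : Fin (∑ a, m a)) : ℕ :=
  if h : { j : ℕ | ∃ hj : j < m a, (s.1 i : ℝ) ≤ ((t a).1 ⟨j, hj⟩ : ℝ) }.Nonempty then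
    sInf { j : ℕ | ∃ hj : j < m a, (s.1 i : ℝ) ≤ ((t a).1 ⟨j, hj⟩ : ℝ) }
  else m a

/-!
The sorted sequence `◁_A t` is `Multiset.sort` of the sum of the multisets of values of the
`t^a`; it is unique because a monotone sequence is the sorted list of its multiset of values.
For the maps `δ^a`, the defining minimum gives `δ^a i ≤ j ↔ (◁_A t)^i ≤ t^{a,j}`, which yields
monotonicity, and since `t^{a,j}` is itself a value of `◁_A t`, it is the largest value
`(◁_A t)^i` with `δ^a i ≤ j`.
-/
theorem Monotone.eq_of_univ_val_map_eq {α : Type*} [LinearOrder α] {n : ℕ} {f g : Fin n → α}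
    (hf : Monotone f) (hg : Monotone g) (h : Finset.univ.val.map f = Finset.univ.val.map g) :
    f = g := by
  refine List.ofFn_injective (List.Perm.eq_of_sortedLE (List.sortedLE_ofFn_iff.2 hf)
    (List.sortedLE_ofFn_iff.2 hg) ?_)
  rwa [← Multiset.coe_eq_coe, ← Fin.univ_val_map, ← Fin.univ_val_map]

theorem Multiset.exists_monotone_univ_val_map_eq {α : Type*} [LinearOrder α] {n : ℕ}
    (M : Multiset α) (hM : M.card = n) :
    ∃ f : Fin n → α, Monotone f ∧ Finset.univ.val.map f = M := by
  subst hM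
  set l := M.sort (· ≤ ·)
  have hl : l.length = M.card := M.length_sort _
  refine ⟨l.get ∘ Fin.cast hl.symm, ?_, ?_⟩
  · exact ((List.sortedLE_iff_pairwise).2 (M.pairwise_sort _)).comp fun _ _ h => h
  · rw [Fin.univ_val_map]
    conv_rhs => rw [← M.sort_eq (· ≤ ·)]
    congr 1
    apply List.ext_get <;> simp [l]

section deltaMap

variable {A : Type} [Fintype A] (m : A → ℕ) (t : ∀ a, PartSp (m a)) (s : PartSp (∑ a, m a))
  (a : A)

theorem deltaMap_le_iff (i : Fin (∑ a, m a)) (j : Fin (m a)) :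
    deltaMap m t s a i ≤ j ↔ (s.1 i : ℝ) ≤ ((t a).1 j : ℝ) := by
  unfold deltaMap
  split_ifs with hne
  · constructor
    · intro h
      obtain ⟨hlt, hle⟩ := Nat.sInf_mem hne
      exact hle.trans (Subtype.mono_coe _ ((t a).2 (show ⟨_, hlt⟩ ≤ j from h)))
    · exact fun h => Nat.sInf_le ⟨j.2, h⟩
  · exact iff_of_false (not_le.2 j.2) fun h => hne ⟨j, j.2, h⟩

theorem deltaMap_le_card (i : Fin (∑ a, m a)) : deltaMap m t s a i ≤ m a := by
  unfold deltaMap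
  split_ifs with hne
  · exact (Nat.sInf_mem hne).1.le
  · rfl

theorem deltaMap_monotone : Monotone (deltaMap m t s a) := by
  intro i i' hii'
  rcases (deltaMap_le_card m t s a i').eq_or_lt with heq | hlt
  · exact heq ▸ deltaMap_le_card m t s a i
  · let j : Fin (m a) := ⟨_, hlt⟩
    refine (deltaMap_le_iff m t s a i j).2 ((Subtype.mono_coe _ (s.2 hii')).trans ?_)
    exact (deltaMap_le_iff m t s a i' j).1 le_rfl

theorem isGreatest_deltaMap_values (j : Fin (m a)) (hj : ∃ i, (s.1 i : ℝ) = (t a).1 j) :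
    IsGreatest { x : ℝ | x = 0 ∨
      ∃ i : Fin (∑ a, m a), deltaMap m t s a i ≤ (j : ℕ) ∧ x = (s.1 i : ℝ) } ((t a).1 j) := by
  obtain ⟨i, hi⟩ := hj
  refine ⟨Or.inr ⟨i, (deltaMap_le_iff m t s a i j).2 hi.le, hi.symm⟩, ?_⟩
  rintro x (rfl | ⟨i, hij, rfl⟩)
  · exact ((t a).1 j).2.1
  · exact (deltaMap_le_iff m t s a i j).1 hij

end deltaMap

theorem stmt_8_general (A : Type) [Fintype A] (m : A → ℕ)
    (t : ∀ a, PartSp (m a)) :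
    (∃! s : PartSp (∑ a, m a),
      (Finset.univ.val.map fun i => ((s.1 i : ℝ)))
        = ∑ a : A, Finset.univ.val.map fun i => (((t a).1 i : ℝ))) ∧
    (∀ s : PartSp (∑ a, m a),
      ((Finset.univ.val.map fun i => ((s.1 i : ℝ)))
          = ∑ a : A, Finset.univ.val.map fun i => (((t a).1 i : ℝ))) →
      ∀ a : A,
        Monotone (deltaMap m t s a) ∧
        ∀ j : Fin (m a),
          ((t a).1 j : ℝ)
            = sSup { x : ℝ | x = 0 ∨
                ∃ i : Fin (∑ a, m a), deltaMap m t s a i ≤ (j : ℕ) ∧ x = (s.1 i : ℝ) }) := by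
  set M : Multiset unitInterval := ∑ a, Finset.univ.val.map (t a).1
  have hM : M.map (↑) = ∑ a, Finset.univ.val.map fun i => ((t a).1 i : ℝ) := by
    rw [← Multiset.coe_mapAddMonoidHom, map_sum]
    exact Finset.sum_congr rfl fun a _ => by
      rw [Multiset.coe_mapAddMonoidHom, Multiset.map_map]; rfl
  refine ⟨?_, fun s hs a => ⟨deltaMap_monotone m t s a, fun j => ?_⟩⟩
  · obtain ⟨f, hf, hfM⟩ := M.exists_monotone_univ_val_map_eq (n := ∑ a, m a)
      (by simp [M, Multiset.card_sum])
    refine ⟨⟨f, hf⟩, by rw [← hM, ← hfM, Multiset.map_map]; rfl, fun s hs => ?_⟩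
    have hcoe : Subtype.val ∘ s.1 = Subtype.val ∘ f :=
      ((Subtype.mono_coe _).comp s.2).eq_of_univ_val_map_eq ((Subtype.mono_coe _).comp hf)
        (by rw [← Multiset.map_map _ f, hfM, hM]; exact hs)
    exact Subtype.ext (Subtype.val_injective.comp_left hcoe)
  · have hj : ((t a).1 j : ℝ) ∈ Finset.univ.val.map fun i => (s.1 i : ℝ) := by
      rw [hs, Multiset.mem_sum]
      exact ⟨a, Finset.mem_univ a, Multiset.mem_map_of_mem _ (Finset.mem_univ_val j)⟩
    obtain ⟨i, -, hi⟩ := Multiset.mem_map.1 hj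
    exact (isGreatest_deltaMap_values m t s a j ⟨i, hi⟩).csSup_eq.symm

/-- For partitions `t^a ∈ Part^⟨m^a⟩` indexed by a finite totally ordered set
`A`, there is a unique element `◁_A t^a ∈ Part^⟨Σ_A m^a⟩` obtained by sorting the multiset
of all the values `t^{a,i}` into nondecreasing order (i.e. the unique monotone sequence
whose multiset of values is the sum of the multisets of values of the `t^a`); moreover for
each `a ∈ A` the map `δ^a i = min { j | (◁_A t)^i ≤ t^{a,j} }` (and `m^a` if no such `j`
exists) is monotone and recovers `t^a` from `◁_A t^a`, i.e. `δ^a · (◁_A t^{a'}) = t^a`: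
each `t^{a,j}` is the largest value `(◁_A t)^i` with `δ^a i ≤ j` (and `0` if there is
none). -/
theorem stmt_8 (A : Type) [Fintype A] [LinearOrder A] (m : A → ℕ)
    (t : ∀ a, PartSp (m a)) :
    (∃! s : PartSp (∑ a, m a),
      (Finset.univ.val.map fun i => ((s.1 i : ℝ)))
        = ∑ a : A, Finset.univ.val.map fun i => (((t a).1 i : ℝ))) ∧
    (∀ s : PartSp (∑ a, m a),
      ((Finset.univ.val.map fun i => ((s.1 i : ℝ)))
          = ∑ a : A, Finset.univ.val.map fun i => (((t a).1 i : ℝ))) →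
      ∀ a : A,
        Monotone (deltaMap m t s a) ∧
        ∀ j : Fin (m a),
          ((t a).1 j : ℝ)
            = sSup { x : ℝ | x = 0 ∨
                ∃ i : Fin (∑ a, m a), deltaMap m t s a i ≤ (j : ℕ) ∧ x = (s.1 i : ℝ) }) :=
  stmt_8_general A m t
end

section
/- For U ≤ V finite-dimensional subspaces of ℝ^∞, the map i^U_V : Emb_U → Emb_V defined by (i^U_V α)_a(v) := v_{V−U} + α_a(v_U), where v_U and v_{V−U} are the orthogonal projections onto U and V ∩ U^⊥, is a morphism of operads: it preserves identities and compositions. -/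
/-- A family `⟨α_a⟩` of self-maps such that the induced map `⊔_A U → U` is an embedding,
i.e. each `α_a` is a topological embedding and the images are pairwise disjoint. -/
def IsEmbFam {U : Type} [TopologicalSpace U] {A : Type} (α : A → U → U) : Prop :=
  (∀ a, Topology.IsEmbedding (α a)) ∧
    Pairwise fun a a' => Disjoint (Set.range (α a)) (Set.range (α a'))

/-- The operadic composition of families of self-maps, indexed by `Σ_A B^a` via
`(a, b) ↦ α_a ∘ β^a_b`. -/
def compF {U : Type} {A : Type} {B : A → Type} (α : A → U → U)
    (β : ∀ a, B a → U → U) : ((a : A) × B a) → U → U :=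
  fun p => α p.1 ∘ β p.1 p.2

/-- The operad map `i^U_V : Emb_U → Emb_V` for `U ≤ V`, defined by
`(i^U_V α)_a(v) := v_{V−U} + α_a(v_U)`, where `v_U` and `v_{V−U}` are the orthogonal
projections onto `U` and `V ⊓ Uᗮ`. -/
noncomputable def iUV {E : Type} [NormedAddCommGroup E] [InnerProductSpace ℝ E]
    (U V : Submodule ℝ E) [FiniteDimensional ℝ U] [FiniteDimensional ℝ V] (hUV : U ≤ V)
    {A : Type} (α : A → ↥U → ↥U) : A → ↥V → ↥V :=
  haveI : FiniteDimensional ℝ ↥(V ⊓ Uᗮ) := Submodule.finiteDimensional_of_le inf_le_left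
  fun a v =>
    Submodule.inclusion inf_le_left (Submodule.orthogonalProjectionOnto (V ⊓ Uᗮ) (v : E)) +
      Submodule.inclusion hUV (α a (Submodule.orthogonalProjectionOnto U (v : E)))

/-! Since `U ≤ V`, the splitting `v ↦ (v_{V−U}, v_U)` is a homeomorphism
`V ≃ (V − U) × U` (with inverse `(w, u) ↦ w + u`), and `(i^U_V α)_a` is the conjugate of `id × α_a` by it.
Both `α ↦ id × α` and conjugation by a fixed homeomorphism preserve embeddings, disjointness of
images, identities and composition. -/

open Submodule Topology

section Conjugation

variable {X Y Z A : Type} [TopologicalSpace X] [TopologicalSpace Y] [TopologicalSpace Z]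

theorem IsEmbFam.prodMap_id {α : A → Y → Y} (hα : IsEmbFam α) :
    IsEmbFam fun a => Prod.map (id : Z → Z) (α a) := by
  refine ⟨fun a => IsEmbedding.id.prodMap (hα.1 a), fun a a' h => ?_⟩
  simp only [Set.range_prodMap, Set.range_id]
  exact Set.disjoint_prod.mpr (Or.inr (hα.2 h))

theorem IsEmbFam.homeomorph_conj (e : X ≃ₜ Y) {α : A → Y → Y} (hα : IsEmbFam α) :
    IsEmbFam fun a => e.symm ∘ α a ∘ e := by
  refine ⟨fun a => e.symm.isEmbedding.comp ((hα.1 a).comp e.isEmbedding), fun a a' h => ?_⟩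
  simp only [Set.range_comp, e.range_coe, Set.image_univ]
  exact (Set.disjoint_image_iff e.symm.injective).mpr (hα.2 h)

end Conjugation

section OrthogonalSplitting

variable {E : Type} [NormedAddCommGroup E] [InnerProductSpace ℝ E] {U V : Submodule ℝ E}

theorem starProjection_inf_orthogonal_of_mem [U.HasOrthogonalProjection]
    [(V ⊓ Uᗮ).HasOrthogonalProjection] (hUV : U ≤ V) {v : E} (hv : v ∈ V) :
    (V ⊓ Uᗮ).starProjection v = v - U.starProjection v := by
  have hPv : U.starProjection v ∈ U := U.starProjection_apply_mem v
  refine eq_starProjection_of_mem_orthogonal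
    (mem_inf.mpr ⟨V.sub_mem hv (hUV hPv), sub_starProjection_mem_orthogonal v⟩) ?_
  rw [sub_sub_cancel]
  exact orthogonal_le inf_le_right (U.le_orthogonal_orthogonal hPv)

theorem orthogonalProjectionOnto_inf_orthogonal_of_mem [(V ⊓ Uᗮ).HasOrthogonalProjection]
    {u : E} (hu : u ∈ U) : (V ⊓ Uᗮ).orthogonalProjectionOnto u = 0 :=
  orthogonalProjectionOnto_apply_of_mem_orthogonal
    (orthogonal_le inf_le_right (U.le_orthogonal_orthogonal hu))

theorem orthogonalProjectionOnto_of_mem_inf_orthogonal [U.HasOrthogonalProjection] {w : E}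
    (hw : w ∈ V ⊓ Uᗮ) : U.orthogonalProjectionOnto w = 0 :=
  orthogonalProjectionOnto_apply_of_mem_orthogonal (mem_inf.mp hw).2

noncomputable def orthogonalSplitting [U.HasOrthogonalProjection]
    [(V ⊓ Uᗮ).HasOrthogonalProjection] (hUV : U ≤ V) : V ≃ₜ ↥(V ⊓ Uᗮ) × U where
  toFun v := ((V ⊓ Uᗮ).orthogonalProjectionOnto v, U.orthogonalProjectionOnto v)
  invFun p := inclusion inf_le_left p.1 + inclusion hUV p.2
  left_inv v := by
    ext
    simp [starProjection_inf_orthogonal_of_mem hUV v.2]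
  right_inv := by
    rintro ⟨w, u⟩
    ext
    · simp [orthogonalProjectionOnto_inf_orthogonal_of_mem u.2]
    · simp [orthogonalProjectionOnto_of_mem_inf_orthogonal w.2]
  continuous_toFun := by fun_prop
  continuous_invFun := by
    apply Continuous.add <;> apply Continuous.subtype_mk <;> fun_prop

end OrthogonalSplitting

theorem iUV_eq_conj {E : Type} [NormedAddCommGroup E] [InnerProductSpace ℝ E]
    {U V : Submodule ℝ E} [FiniteDimensional ℝ U] [FiniteDimensional ℝ V] (hUV : U ≤ V)
    {A : Type} (α : A → U → U) :
    iUV U V hUV α =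
      fun a => (orthogonalSplitting hUV).symm ∘ Prod.map id (α a) ∘ orthogonalSplitting hUV :=
  rfl

/-- For `U ≤ V` finite-dimensional subspaces of `ℝ^∞` (here: of an arbitrary
real inner product space), the map `i^U_V : Emb_U → Emb_V`,
`(i^U_V α)_a(v) := v_{V−U} + α_a(v_U)`, is a morphism of operads: it carries families of
embeddings with pairwise disjoint images to such families, preserves the identity, and
preserves compositions. -/
theorem stmt_12 (E : Type) [NormedAddCommGroup E] [InnerProductSpace ℝ E]
    (U V : Submodule ℝ E) [FiniteDimensional ℝ U] [FiniteDimensional ℝ V] (hUV : U ≤ V) :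
    (∀ {A : Type} (α : A → ↥U → ↥U), IsEmbFam α → IsEmbFam (iUV U V hUV α)) ∧
    (∀ {A : Type} (a : A) (v : ↥V), iUV U V hUV (fun _ (u : ↥U) => u) a v = v) ∧
    (∀ {A : Type} {B : A → Type} (α : A → ↥U → ↥U) (β : ∀ a, B a → ↥U → ↥U)
        (p : (a : A) × B a) (v : ↥V),
      iUV U V hUV (compF α β) p v
        = compF (iUV U V hUV α) (fun a => iUV U V hUV (β a)) p v) := by
  refine ⟨fun {A} α hα => ?_, fun {A} a v => ?_, fun {A B} α β p v => ?_⟩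
  · rw [iUV_eq_conj]
    exact hα.prodMap_id.homeomorph_conj (orthogonalSplitting hUV)
  · rw [iUV_eq_conj]
    exact (orthogonalSplitting hUV).symm_apply_apply v
  · simp only [iUV_eq_conj, compF, Function.comp_apply, Homeomorph.apply_symm_apply]
    rfl
end
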